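/- Let x ∈ ℝ⁶ with all coordinates positive and x1 > 1, let i ∈ {2,3,4,5}, and let î be defined by 2̂ = 3, 3̂ = 2, 4̂ = 5, 5̂ = 4; let m_k denote the k-th coordinate unit vector of ℝ⁶, and let φ(x) = (x3·x4 + x2·x5 + x1·x2·x3 + x1·x4·x5 + x6 − x1²·x6) / (√(x1² + x3² + x5² + 2·x1·x3·x5 − 1) · √(x2² + x4² + 2·x1·x2·x4)). (i) If ∂φ/∂x_i(x) ≥ 0, then for all t, s ≥ 0 one has ∂φ/∂x_i(x + t·m_i + s·m_î) ≥ 0; in particular φ(x) ≤ φ(y) for any y with y_i ≥ x_i and y_j = x_j for all j ≠ i. (ii) If ∂φ/∂x_i(x) ≤ 0, then for all t, s ≤ 0 with x + t·m_i + s·m_î having all coordinates positive one has ∂φ/∂x_i(x + t·m_i + s·m_î) ≤ 0; in particular φ(x) ≤ φ(y) for any y with positive coordinates, y_i ≤ x_i and y_j = x_j for all j ≠ i. -/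

import Mathlib

/-- The cosine of the dihedral angle at the hyper-ideal edge e23 of a decorated
3-1 type hyperbolic tetrahedron, as a function of `x : Fin 6 → ℝ`
(with `x 0, ..., x 5` standing for `x1, ..., x6`). -/
noncomputable def Phi (x : Fin 6 → ℝ) : ℝ :=
  (x 2 * x 3 + x 1 * x 4 + x 0 * x 1 * x 2 + x 0 * x 3 * x 4 + x 5 - (x 0) ^ 2 * x 5) /
    (Real.sqrt ((x 0) ^ 2 + (x 2) ^ 2 + (x 4) ^ 2 + 2 * x 0 * x 2 * x 4 - 1) *
      Real.sqrt ((x 1) ^ 2 + (x 3) ^ 2 + 2 * x 0 * x 1 * x 3))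

/-- The partial derivative of `Phi` in the `i`-th coordinate. -/
noncomputable def partialPhi (i : Fin 6) (x : Fin 6 → ℝ) : ℝ :=
  deriv (fun t => Phi (Function.update x i t)) (x i)

/-- The `k`-th coordinate unit vector of ℝ⁶. -/
noncomputable def unitVec (k : Fin 6) : Fin 6 → ℝ := Pi.single k 1

/-!
Along the `xᵢ`-line, `φ` has the form `(p t + q) / (K √(t² + 2 r t + c))`, whose derivative has
the sign of the affine expression `p (r t + c) - q (t + r)`. For `i ∈ {2, 3, 4, 5}` this is
`x1² - 1` times a polynomial that is nondecreasing in `xᵢ` and `x_î` on the positive orthant, so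
the sign of `∂φ/∂xᵢ` persists when `xᵢ` and `x_î` both increase (nonnegative case) or both
decrease (nonpositive case). Monotonicity of `φ` in `xᵢ` then follows from the mean value theorem.
-/

open Function Set

theorem hasDerivAt_affine_div_sqrt_quadratic {p q r c K t : ℝ} (hK : K ≠ 0)
    (hQ : 0 < t ^ 2 + 2 * r * t + c) :
    HasDerivAt (fun s => (p * s + q) / (K * √(s ^ 2 + 2 * r * s + c)))
      ((p * (r * t + c) - q * (t + r)) / (K * √(t ^ 2 + 2 * r * t + c) ^ 3)) t := by
  have hS : 0 < √(t ^ 2 + 2 * r * t + c) := Real.sqrt_pos.2 hQ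
  have hQ' : HasDerivAt (fun s => s ^ 2 + 2 * r * s + c) (2 * t + 2 * r) t := by
    simpa using
      (((hasDerivAt_id t).pow 2).add ((hasDerivAt_id t).const_mul (2 * r))).add_const c
  have hden : HasDerivAt (fun s => K * √(s ^ 2 + 2 * r * s + c))
      (K * (1 / (2 * √(t ^ 2 + 2 * r * t + c)) * (2 * t + 2 * r))) t :=
    ((Real.hasDerivAt_sqrt hQ.ne').comp t hQ').const_mul K
  have hnum : HasDerivAt (fun s => p * s + q) p t := by
    simpa using ((hasDerivAt_id t).const_mul p).add_const q
  refine (hnum.div hden (mul_ne_zero hK hS.ne')).congr_deriv ?_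
  have hsq := Real.sq_sqrt hQ.le
  set S := √(t ^ 2 + 2 * r * t + c)
  field_simp
  linear_combination p * hsq

theorem exists_pos_hasDerivAt_of_eq_affine_div_sqrt {f : ℝ → ℝ} {p q r c K m N t : ℝ}
    (hf : ∀ s, f s = (p * s + q) / (K * √(s ^ 2 + 2 * r * s + c))) (hK : 0 < K)
    (hQ : 0 < t ^ 2 + 2 * r * t + c) (hm : 0 < m)
    (hN : p * (r * t + c) - q * (t + r) = m * N) :
    ∃ C > 0, HasDerivAt f (C * N) t := by
  refine ⟨m / (K * √(t ^ 2 + 2 * r * t + c) ^ 3), by positivity, ?_⟩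
  rw [funext hf, div_mul_eq_mul_div, ← hN]
  exact hasDerivAt_affine_div_sqrt_quadratic hK.ne' hQ

/-- `IsHatPair i ih` says that `ih = î`, in 0-based indexing. -/
def IsHatPair (i ih : Fin 6) : Prop :=
  (i = 1 ∧ ih = 2) ∨ (i = 2 ∧ ih = 1) ∨ (i = 3 ∧ ih = 4) ∨ (i = 4 ∧ ih = 3)

/-- The numerator of `∂Φ/∂xᵢ` divided by `x 0 ^ 2 - 1`, for `i ∈ {1, 2, 3, 4}`; the value `0` at
`i ∈ {0, 5}` is a junk value. -/
def partialPhiSign : Fin 6 → (Fin 6 → ℝ) → ℝ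
  | 1, w => w 1 * w 2 * w 3 + w 1 * w 5 + w 0 * w 3 * w 5 - w 3 ^ 2 * w 4
  | 2, w => w 3 + w 0 * w 1 + w 1 * w 2 * w 4 + w 2 * w 5 + w 0 * w 4 * w 5 - w 3 * w 4 ^ 2
  | 3, w => w 1 * w 3 * w 4 + w 3 * w 5 + w 0 * w 1 * w 5 - w 1 ^ 2 * w 2
  | 4, w => w 1 + w 0 * w 3 + w 2 * w 3 * w 4 + w 4 * w 5 + w 0 * w 2 * w 5 - w 1 * w 2 ^ 2
  | _, _ => 0

theorem exists_pos_hasDerivAt_phi_update {i : Fin 6} (hi : i = 1 ∨ i = 2 ∨ i = 3 ∨ i = 4)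
    {z : Fin 6 → ℝ} (hz : ∀ j, 0 < z j) (hz0 : 1 < z 0) :
    ∃ C > 0, HasDerivAt (fun t => Phi (update z i t)) (C * partialPhiSign i z) (z i) := by
  have hm : 0 < z 0 ^ 2 - 1 := by nlinarith
  have h024 := mul_pos (mul_pos (hz 0) (hz 2)) (hz 4)
  have h013 := mul_pos (mul_pos (hz 0) (hz 1)) (hz 3)
  have hA : 0 < √(z 0 ^ 2 + z 2 ^ 2 + z 4 ^ 2 + 2 * z 0 * z 2 * z 4 - 1) :=
    Real.sqrt_pos.2 (by nlinarith)
  have hB : 0 < √(z 1 ^ 2 + z 3 ^ 2 + 2 * z 0 * z 1 * z 3) := Real.sqrt_pos.2 (by nlinarith [hz 1])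
  rcases hi with rfl | rfl | rfl | rfl
  · exact exists_pos_hasDerivAt_of_eq_affine_div_sqrt (p := z 4 + z 0 * z 2)
      (q := z 2 * z 3 + z 0 * z 3 * z 4 + z 5 - z 0 ^ 2 * z 5) (r := z 0 * z 3) (c := z 3 ^ 2)
      (fun s => by simp [Phi]; ring_nf) hA (by nlinarith) hm (by simp only [partialPhiSign]; ring)
  · exact exists_pos_hasDerivAt_of_eq_affine_div_sqrt (p := z 3 + z 0 * z 1)
      (q := z 1 * z 4 + z 0 * z 3 * z 4 + z 5 - z 0 ^ 2 * z 5) (r := z 0 * z 4)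
      (c := z 0 ^ 2 + z 4 ^ 2 - 1)
      (fun s => by simp [Phi]; ring_nf) hB (by nlinarith) hm (by simp only [partialPhiSign]; ring)
  · exact exists_pos_hasDerivAt_of_eq_affine_div_sqrt (p := z 2 + z 0 * z 4)
      (q := z 1 * z 4 + z 0 * z 1 * z 2 + z 5 - z 0 ^ 2 * z 5) (r := z 0 * z 1) (c := z 1 ^ 2)
      (fun s => by simp [Phi]; ring_nf) hA (by nlinarith) hm (by simp only [partialPhiSign]; ring)
  · exact exists_pos_hasDerivAt_of_eq_affine_div_sqrt (p := z 1 + z 0 * z 3)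
      (q := z 2 * z 3 + z 0 * z 1 * z 2 + z 5 - z 0 ^ 2 * z 5) (r := z 0 * z 2)
      (c := z 0 ^ 2 + z 2 ^ 2 - 1)
      (fun s => by simp [Phi]; ring_nf) hB (by nlinarith) hm (by simp only [partialPhiSign]; ring)

section Sign

variable {i : Fin 6} (hi : i = 1 ∨ i = 2 ∨ i = 3 ∨ i = 4) {z : Fin 6 → ℝ} (hz : ∀ j, 0 < z j)
  (hz0 : 1 < z 0)
include hi hz hz0

theorem exists_pos_partialPhi_eq : ∃ C > 0, partialPhi i z = C * partialPhiSign i z := by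
  obtain ⟨C, hC, hd⟩ := exists_pos_hasDerivAt_phi_update hi hz hz0
  exact ⟨C, hC, hd.deriv⟩

theorem partialPhi_nonneg_iff : 0 ≤ partialPhi i z ↔ 0 ≤ partialPhiSign i z := by
  obtain ⟨C, hC, h⟩ := exists_pos_partialPhi_eq hi hz hz0
  rw [h, mul_nonneg_iff_of_pos_left hC]

theorem partialPhi_nonpos_iff : partialPhi i z ≤ 0 ↔ partialPhiSign i z ≤ 0 := by
  obtain ⟨C, hC, h⟩ := exists_pos_partialPhi_eq hi hz hz0
  rw [h, ← neg_nonneg, ← mul_neg, mul_nonneg_iff_of_pos_left hC, neg_nonneg]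

end Sign

namespace IsHatPair

variable {i ih : Fin 6} (h : IsHatPair i ih)
include h

theorem mem : i = 1 ∨ i = 2 ∨ i = 3 ∨ i = 4 := by
  rcases h with ⟨rfl, -⟩ | ⟨rfl, -⟩ | ⟨rfl, -⟩ | ⟨rfl, -⟩ <;> simp

theorem left_ne_zero : i ≠ 0 := by
  rcases h with ⟨rfl, -⟩ | ⟨rfl, -⟩ | ⟨rfl, -⟩ | ⟨rfl, -⟩ <;> decide

theorem right_ne_zero : ih ≠ 0 := by
  rcases h with ⟨-, rfl⟩ | ⟨-, rfl⟩ | ⟨-, rfl⟩ | ⟨-, rfl⟩ <;> decide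

end IsHatPair

theorem partialPhiSign_mono {i ih : Fin 6} (h : IsHatPair i ih) {z z' : Fin 6 → ℝ}
    (hz : ∀ j, 0 < z j) (hle : z ≤ z') (heq : ∀ j, j ≠ i → j ≠ ih → z' j = z j) :
    partialPhiSign i z ≤ partialPhiSign i z' := by
  have hz' j : 0 < z' j := (hz j).trans_le (hle j)
  have := hz 0; have := hz 1; have := hz 2; have := hz 3; have := hz 4; have := hz 5
  have := hz' 1; have := hz' 2; have := hz' 3; have := hz' 4
  rcases h with ⟨rfl, rfl⟩ | ⟨rfl, rfl⟩ | ⟨rfl, rfl⟩ | ⟨rfl, rfl⟩ <;>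
    simp only [partialPhiSign, heq 0 (by decide) (by decide), heq 5 (by decide) (by decide)]
  · rw [heq 3 (by decide) (by decide), heq 4 (by decide) (by decide)]
    gcongr <;> exact hle _
  · rw [heq 3 (by decide) (by decide), heq 4 (by decide) (by decide)]
    gcongr <;> exact hle _
  · rw [heq 1 (by decide) (by decide), heq 2 (by decide) (by decide)]
    gcongr <;> exact hle _
  · rw [heq 1 (by decide) (by decide), heq 2 (by decide) (by decide)]
    gcongr <;> exact hle _

section Persistence

variable {i ih : Fin 6} (h : IsHatPair i ih) {x z : Fin 6 → ℝ} (hx0 : 1 < x 0)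
  (heq : ∀ j, j ≠ i → j ≠ ih → z j = x j)
include h hx0 heq

theorem partialPhi_nonneg_of_le (hx : ∀ j, 0 < x j) (hle : x ≤ z) (hd : 0 ≤ partialPhi i x) :
    0 ≤ partialPhi i z := by
  have hz j : 0 < z j := (hx j).trans_le (hle j)
  rw [partialPhi_nonneg_iff h.mem hz (heq 0 h.left_ne_zero.symm h.right_ne_zero.symm ▸ hx0)]
  exact ((partialPhi_nonneg_iff h.mem hx hx0).1 hd).trans (partialPhiSign_mono h hx hle heq)

theorem partialPhi_nonpos_of_le (hz : ∀ j, 0 < z j) (hle : z ≤ x) (hd : partialPhi i x ≤ 0) :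
    partialPhi i z ≤ 0 := by
  have hx j : 0 < x j := (hz j).trans_le (hle j)
  rw [partialPhi_nonpos_iff h.mem hz (heq 0 h.left_ne_zero.symm h.right_ne_zero.symm ▸ hx0)]
  exact (partialPhiSign_mono h hz hle fun j hi hih => (heq j hi hih).symm).trans
    ((partialPhi_nonpos_iff h.mem hx hx0).1 hd)

end Persistence

theorem update_pos {ι : Type*} [DecidableEq ι] {x : ι → ℝ} (hx : ∀ j, 0 < x j) {i : ι} {t : ℝ}
    (ht : 0 < t) (j : ι) : 0 < update x i t j :=
  (forall_update_iff x fun _ v => 0 < v).2 ⟨ht, fun j _ => hx j⟩ j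

section Segment

variable {i : Fin 6} (hi : i = 1 ∨ i = 2 ∨ i = 3 ∨ i = 4) {x : Fin 6 → ℝ} (hx : ∀ j, 0 < x j)
  (hx0 : 1 < x 0)
include hi hx hx0

theorem hasDerivAt_phi_update {t : ℝ} (ht : 0 < t) :
    HasDerivAt (fun u => Phi (update x i u)) (partialPhi i (update x i t)) t := by
  have hz := update_pos hx (i := i) ht
  have hi0 : i ≠ 0 := by rcases hi with rfl | rfl | rfl | rfl <;> decide
  obtain ⟨_, -, hd⟩ := exists_pos_hasDerivAt_phi_update hi hz (by rwa [update_of_ne hi0.symm])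
  simpa [partialPhi] using hd.differentiableAt.hasDerivAt

variable {a b : ℝ} (ha : 0 < a)
include ha

theorem monotoneOn_phi_update (hd : ∀ t ∈ Ioo a b, 0 ≤ partialPhi i (update x i t)) :
    MonotoneOn (fun t => Phi (update x i t)) (Icc a b) := by
  have hderiv t (ht : t ∈ Icc a b) := hasDerivAt_phi_update hi hx hx0 (ha.trans_le ht.1)
  refine monotoneOn_of_deriv_nonneg (convex_Icc a b)
    (fun t ht => (hderiv t ht).continuousAt.continuousWithinAt) ?_ ?_ <;> rw [interior_Icc]
  · exact fun t ht => (hderiv t (Ioo_subset_Icc_self ht)).differentiableAt.differentiableWithinAt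
  · exact fun t ht => (hderiv t (Ioo_subset_Icc_self ht)).deriv ▸ hd t ht

theorem antitoneOn_phi_update (hd : ∀ t ∈ Ioo a b, partialPhi i (update x i t) ≤ 0) :
    AntitoneOn (fun t => Phi (update x i t)) (Icc a b) := by
  have hderiv t (ht : t ∈ Icc a b) := hasDerivAt_phi_update hi hx hx0 (ha.trans_le ht.1)
  refine antitoneOn_of_deriv_nonpos (convex_Icc a b)
    (fun t ht => (hderiv t ht).continuousAt.continuousWithinAt) ?_ ?_ <;> rw [interior_Icc]
  · exact fun t ht => (hderiv t (Ioo_subset_Icc_self ht)).differentiableAt.differentiableWithinAt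
  · exact fun t ht => (hderiv t (Ioo_subset_Icc_self ht)).deriv ▸ hd t ht

end Segment

theorem unitVec_nonneg (k : Fin 6) : 0 ≤ unitVec k := Pi.single_nonneg.2 zero_le_one

section Shift

variable (x : Fin 6 → ℝ) (i ih : Fin 6) {t s : ℝ}

theorem add_smul_unitVec_apply_of_ne {j : Fin 6} (hi : j ≠ i) (hih : j ≠ ih) :
    (x + t • unitVec i + s • unitVec ih) j = x j := by
  simp [unitVec, hi, hih]

theorem le_add_smul_unitVec (ht : 0 ≤ t) (hs : 0 ≤ s) : x ≤ x + t • unitVec i + s • unitVec ih :=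
  le_add_of_le_of_nonneg (le_add_of_nonneg_right (smul_nonneg ht (unitVec_nonneg i)))
    (smul_nonneg hs (unitVec_nonneg ih))

theorem add_smul_unitVec_le (ht : t ≤ 0) (hs : s ≤ 0) : x + t • unitVec i + s • unitVec ih ≤ x :=
  add_le_of_le_of_nonpos
    (add_le_of_nonpos_right (smul_nonpos_of_nonpos_of_nonneg ht (unitVec_nonneg i)))
    (smul_nonpos_of_nonpos_of_nonneg hs (unitVec_nonneg ih))

end Shift

/-- sign persistence of the partial derivatives ∂φ/∂x_i
(i ∈ {x2,x3,x4,x5}, i.e. coordinates 1,2,3,4) under increasing (resp. decreasing)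
the coordinates i and î, and the resulting monotonicity of φ.
Here `i`, `ih` range over the pairs (x2,x3), (x3,x2), (x4,x5), (x5,x4). -/
theorem stmt_10 (x : Fin 6 → ℝ) (hpos : ∀ j, 0 < x j) (hx1 : 1 < x 0)
    (i ih : Fin 6)
    (hpair : (i = 1 ∧ ih = 2) ∨ (i = 2 ∧ ih = 1) ∨ (i = 3 ∧ ih = 4) ∨ (i = 4 ∧ ih = 3)) :
    (0 ≤ partialPhi i x →
      (∀ t s : ℝ, 0 ≤ t → 0 ≤ s →
        0 ≤ partialPhi i (x + t • unitVec i + s • unitVec ih)) ∧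
      (∀ y : Fin 6 → ℝ, x i ≤ y i → (∀ j, j ≠ i → y j = x j) → Phi x ≤ Phi y)) ∧
    (partialPhi i x ≤ 0 →
      (∀ t s : ℝ, t ≤ 0 → s ≤ 0 →
        (∀ j, 0 < (x + t • unitVec i + s • unitVec ih) j) →
        partialPhi i (x + t • unitVec i + s • unitVec ih) ≤ 0) ∧
      (∀ y : Fin 6 → ℝ, (∀ j, 0 < y j) → y i ≤ x i → (∀ j, j ≠ i → y j = x j) →
        Phi x ≤ Phi y)) := by
  have h : IsHatPair i ih := hpair
  have hupd t j (hi : j ≠ i) (_ : j ≠ ih) : update x i t j = x j := update_of_ne hi _ _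
  have hy {y : Fin 6 → ℝ} (hyj : ∀ j, j ≠ i → y j = x j) : update x i (y i) = y :=
    update_eq_iff.2 ⟨rfl, fun j hj => (hyj j hj).symm⟩
  refine ⟨fun hd => ⟨fun t s ht hs => ?_, fun y hyi hyj => ?_⟩,
    fun hd => ⟨fun t s ht hs hz => ?_, fun y hy0 hyi hyj => ?_⟩⟩
  · exact partialPhi_nonneg_of_le h hx1 (fun _ => add_smul_unitVec_apply_of_ne x i ih) hpos
      (le_add_smul_unitVec x i ih ht hs) hd
  · have hmono := monotoneOn_phi_update h.mem hpos hx1 (hpos i) (b := y i) fun t ht =>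
      partialPhi_nonneg_of_le h hx1 (hupd t) hpos
        (le_update_iff.2 ⟨ht.1.le, fun _ _ => le_rfl⟩) hd
    simpa [hy hyj] using hmono ⟨le_rfl, hyi⟩ ⟨hyi, le_rfl⟩ hyi
  · exact partialPhi_nonpos_of_le h hx1 (fun _ => add_smul_unitVec_apply_of_ne x i ih) hz
      (add_smul_unitVec_le x i ih ht hs) hd
  · have hanti := antitoneOn_phi_update h.mem hpos hx1 (hy0 i) (b := x i) fun t ht =>
      partialPhi_nonpos_of_le h hx1 (hupd t) (update_pos hpos ((hy0 i).trans ht.1))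
        (update_le_iff.2 ⟨ht.2.le, fun _ _ => le_rfl⟩) hd
    simpa [hy hyj] using hanti ⟨le_rfl, hyi⟩ ⟨hyi, le_rfl⟩ hyi
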